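/- arXiv:2506.07846 — 2 statements merged into one kernel-verified Lean document; each statement's English description precedes it below -/
import Mathlib

section
/- Let C be a Griesmer [g_q(k,d),k,d] code over F_q with k ≥ 2, identified with a multiset M of points in PG(k−1,q), and let P be a point achieving the maximum multiplicity γ(M). Then the shortened subcode C_P, consisting of all codewords vanishing on all coordinates whose column equals P, is a Griesmer [g_q(k−1,d), k−1, d] code. -/
/-- Hamming weight of a vector. -/
noncomputable def wt {ι F : Type*} [Zero F] (c : ι → F) : ℕ :=
  Nat.card {i // c i ≠ 0}

/-- Griesmer sum `g_q(k,d) = ∑_{i<k} ⌈d / q^i⌉` (using `(d + q^i - 1)/q^i`). -/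
def gbound (q k d : ℕ) : ℕ :=
  ∑ i ∈ Finset.range k, (d + q ^ i - 1) / q ^ i

/-!
Averaging the point multiplicities over the `q^k - 1` nonzero vectors shows that a point `P` of
maximal multiplicity occurs at least `⌈d/q^(k-1)⌉` times, which is the last summand of
`g_q(k,d)`. The shortened code `C_P` has dimension `k - 1` and minimum distance at least `d`, and
its support avoids the coordinates of `P`, so the support has at most
`n - ⌈d/q^(k-1)⌉ = g_q(k-1,d)` elements. The Griesmer bound for `C_P` punctured to its support
gives the reverse inequality, and applied once more with the true minimum distance of `C_P` it
shows that this minimum distance is exactly `d`.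

The Griesmer bound is proved by induction through residual codes: restricting to the zeros of a
word `c` of minimum weight `w` lowers the dimension by one, and averaging `wt (b - α • c)` over
`α ∈ F` shows that the residual code has minimum distance at least `⌈w/q⌉`.
-/

open Finset Submodule Module

lemma ceilDiv_ceilDiv {a b : ℕ} (ha : 0 < a) (hb : 0 < b) (c : ℕ) :
    c ⌈/⌉ a ⌈/⌉ b = c ⌈/⌉ (a * b) :=
  eq_of_forall_ge_iff fun e => by
    rw [ceilDiv_le_iff_le_mul hb, ceilDiv_le_iff_le_mul ha, ceilDiv_le_iff_le_mul (mul_pos ha hb),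
      mul_assoc]

namespace gbound

variable {q : ℕ}

lemma eq_sum_ceilDiv (q k d : ℕ) : gbound q k d = ∑ i ∈ range k, d ⌈/⌉ q ^ i := rfl

@[simp] lemma zero_right (q k : ℕ) : gbound q k 0 = 0 := by simp [eq_sum_ceilDiv]

lemma succ (q k d : ℕ) : gbound q (k + 1) d = gbound q k d + d ⌈/⌉ q ^ k :=
  sum_range_succ _ _

lemma succ' (hq : 0 < q) (k d : ℕ) : gbound q (k + 1) d = d + gbound q k (d ⌈/⌉ q) := by
  simp only [eq_sum_ceilDiv, sum_range_succ', pow_zero, ceilDiv_one, add_comm d,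
    ceilDiv_ceilDiv hq (pow_pos hq _), pow_succ']

lemma monotone (hq : 0 < q) (k : ℕ) : Monotone (gbound q k) := fun _ _ h =>
  sum_le_sum fun i _ => (gc_mul_ceilDiv (pow_pos hq i)).monotone_l h

lemma strictMono (hq : 0 < q) {k : ℕ} (hk : 0 < k) : StrictMono (gbound q k) := fun _ _ h =>
  sum_lt_sum (fun i _ => (gc_mul_ceilDiv (pow_pos hq i)).monotone_l h.le)
    ⟨0, mem_range.2 hk, by simpa using h⟩

end gbound

lemma ceilDiv_pow_le_of_gbound_mul_le {q k d m : ℕ} (hq : 2 ≤ q) (hk : 0 < k)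
    (h : gbound q k d * (q - 1) ≤ (q ^ k - 1) * m) : d ⌈/⌉ q ^ (k - 1) ≤ m := by
  -- If `m < ⌈d/q^(k-1)⌉`, every summand `⌈d/q^i⌉` exceeds `m q^(k-1-i)`, so
  -- `gbound q k d ≥ m (q^k - 1)/(q - 1) + k`, which contradicts `h`.
  by_contra! hlt
  rw [← not_le, ceilDiv_le_iff_le_mul (by positivity), not_le] at hlt
  have hterm : ∀ i ∈ range k, m * q ^ (k - 1 - i) + 1 ≤ d ⌈/⌉ q ^ i := by
    intro i hi
    rw [Nat.add_one_le_iff, ← not_le, ceilDiv_le_iff_le_mul (by positivity), not_le]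
    calc q ^ i * (m * q ^ (k - 1 - i)) = q ^ (k - 1) * m := by
          rw [mul_left_comm, ← pow_add, Nat.add_sub_cancel' (by simp at hi; omega), mul_comm]
      _ < d := hlt
  have hsum : m * ∑ i ∈ range k, q ^ i + k ≤ gbound q k d := by
    calc m * ∑ i ∈ range k, q ^ i + k = ∑ i ∈ range k, (m * q ^ (k - 1 - i) + 1) := by
          rw [sum_add_distrib, ← mul_sum, sum_range_reflect (q ^ ·) k]; simp
      _ ≤ gbound q k d := sum_le_sum hterm
  have hgeom : (∑ i ∈ range k, q ^ i) * (q - 1) + 1 = q ^ k := by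
    simpa [Nat.sub_add_cancel (by omega : 1 ≤ q)] using geom_sum_mul_add (q - 1) k
  have hk1 : 1 ≤ k * (q - 1) := Nat.mul_pos hk (by omega)
  rw [← hgeom, Nat.add_sub_cancel] at h
  nlinarith [Nat.mul_le_mul_right (q - 1) hsum]

section Weight

variable {ι F : Type*} [Fintype ι]

lemma wt_eq_hammingNorm [Zero F] [DecidableEq F] (c : ι → F) : wt c = hammingNorm c := by
  classical
  rw [wt, Nat.card_eq_fintype_card, Fintype.card_subtype, hammingNorm]

lemma wt_pos_iff [Zero F] {c : ι → F} : 0 < wt c ↔ c ≠ 0 := by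
  classical
  rw [wt_eq_hammingNorm, hammingNorm_pos_iff]

@[simp] lemma wt_zero [Zero F] : wt (0 : ι → F) = 0 := by
  classical
  simp [wt_eq_hammingNorm]

variable [Field F] [Fintype F]

lemma card_filter_sub_mul_ne_zero [DecidableEq F] (x : F) {y : F} (hy : y ≠ 0) :
    #{α : F | x - α * y ≠ 0} = Fintype.card F - 1 := by
  rw [filter_congr fun α _ => show x - α * y ≠ 0 ↔ α ≠ x / y by
      rw [ne_eq, ne_eq, sub_eq_zero, eq_div_iff hy, eq_comm],
    filter_ne', card_erase_of_mem (mem_univ _), card_univ]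

lemma sum_wt_sub_smul (b c : ι → F) :
    ∑ α : F, wt (b - α • c) =
      (Fintype.card F - 1) * wt c + Fintype.card F * wt (fun j : {j // c j = 0} => b j) := by
  classical
  simp only [wt_eq_hammingNorm, hammingNorm, Pi.sub_apply, Pi.smul_apply, smul_eq_mul, card_filter]
  rw [sum_comm, ← Fintype.sum_subtype_add_sum_subtype (fun j => c j = 0), add_comm]
  simp only [← card_filter]
  congr 1
  · rw [sum_congr rfl fun (j : {j // ¬c j = 0}) _ => card_filter_sub_mul_ne_zero (b j) j.prop,
      sum_const, card_univ, Fintype.card_subtype, smul_eq_mul, mul_comm]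
  · have hcount (j : {j // c j = 0}) :
        #{α : F | b j - α * c j ≠ 0} = if b j ≠ 0 then Fintype.card F else 0 := by
      rw [j.prop]
      split_ifs with h <;> simp [h]
    simp [hcount, sum_ite, mul_comm]

end Weight

lemma Submodule.finrank_map_add_finrank_inf_ker {K V W : Type*} [Field K] [AddCommGroup V]
    [Module K V] [FiniteDimensional K V] [AddCommGroup W] [Module K W] (f : V →ₗ[K] W)
    (D : Submodule K V) :
    finrank K (D.map f) + finrank K ↥(D ⊓ LinearMap.ker f) = finrank K D := by
  rw [← LinearMap.range_domRestrict, ← map_comap_subtype, ← LinearMap.ker_domRestrict,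
    Submodule.finrank_map_subtype_eq]
  exact LinearMap.finrank_range_add_finrank_ker _

section Griesmer

variable {ι F : Type*} [Fintype ι] [Field F] [Fintype F]

lemma Submodule.exists_min_wt (D : Submodule F (ι → F)) (hD : D ≠ ⊥) :
    ∃ c₀ ∈ D, c₀ ≠ 0 ∧ ∀ c ∈ D, c ≠ 0 → wt c₀ ≤ wt c := by
  obtain ⟨c₀, ⟨hc₀D, hc₀⟩, hmin⟩ := Set.exists_min_image {c | c ∈ D ∧ c ≠ 0} wt
    (Set.toFinite _) (Submodule.exists_mem_ne_zero_of_ne_bot hD)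
  exact ⟨c₀, hc₀D, hc₀, fun c hc hc0 => hmin c ⟨hc, hc0⟩⟩

lemma ceilDiv_le_wt_restrict_zeros {D : Submodule F (ι → F)} {c₀ b : ι → F} (hc₀ : c₀ ∈ D)
    (hmin : ∀ c ∈ D, c ≠ 0 → wt c₀ ≤ wt c) (hb : b ∈ D) (hb' : b ∉ span F {c₀}) :
    wt c₀ ⌈/⌉ Fintype.card F ≤ wt (fun j : {j // c₀ j = 0} => b j) := by
  set q := Fintype.card F
  have hq : 0 < q := Fintype.card_pos
  have hsub (α : F) : wt c₀ ≤ wt (b - α • c₀) := by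
    refine hmin _ (D.sub_mem hb (D.smul_mem α hc₀)) fun h => hb' ?_
    exact mem_span_singleton.2 ⟨α, (sub_eq_zero.1 h).symm⟩
  have hsum : q * wt c₀ ≤ (q - 1) * wt c₀ + q * wt (fun j : {j // c₀ j = 0} => b j) := by
    rw [← sum_wt_sub_smul]
    simpa using card_nsmul_le_sum univ _ _ fun α _ => hsub α
  rw [ceilDiv_le_iff_le_mul hq]
  have : (q - 1) * wt c₀ + wt c₀ = q * wt c₀ := by
    rw [← Nat.succ_mul, Nat.succ_eq_add_one, Nat.sub_add_cancel hq]
  omega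

theorem gbound_finrank_le_card (D : Submodule F (ι → F)) {δ : ℕ}
    (hδ : ∀ c ∈ D, c ≠ 0 → δ ≤ wt c) :
    gbound (Fintype.card F) (finrank F D) δ ≤ Fintype.card ι := by
  obtain ⟨κ, hκ⟩ : ∃ κ, finrank F D = κ := ⟨_, rfl⟩
  rw [hκ]
  induction κ generalizing ι D δ with
  | zero => simp [gbound]
  | succ κ ih =>
    classical
    set q := Fintype.card F
    have hq : 0 < q := Fintype.card_pos
    obtain ⟨c₀, hc₀D, hc₀, hc₀min⟩ := D.exists_min_wt (by rintro rfl; simp at hκ)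
    let π : (ι → F) →ₗ[F] ({j // c₀ j = 0} → F) := LinearMap.funLeft F F Subtype.val
    have hres (b) (hb : b ∈ D) (hb' : b ∉ span F {c₀}) : wt c₀ ⌈/⌉ q ≤ wt (π b) :=
      ceilDiv_le_wt_restrict_zeros hc₀D hc₀min hb hb'
    have hker : D ⊓ LinearMap.ker π = span F {c₀} := by
      apply le_antisymm
      · rintro b ⟨hb, hπb⟩
        by_contra hb'
        have h := hres b hb hb'
        rw [LinearMap.mem_ker.1 hπb, wt_zero, ceilDiv_le_iff_le_mul hq, mul_zero] at h
        exact (wt_pos_iff.2 hc₀).ne' (Nat.le_zero.1 h)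
      · rw [span_le, Set.singleton_subset_iff]
        exact ⟨hc₀D, funext fun j => j.prop⟩
    have hrank : finrank F (D.map π) = κ := by
      have := D.finrank_map_add_finrank_inf_ker π
      rw [hker, finrank_span_singleton hc₀, hκ] at this
      omega
    have hmin' (c) (hc : c ∈ D.map π) (hc0 : c ≠ 0) : wt c₀ ⌈/⌉ q ≤ wt c := by
      obtain ⟨b, hb, rfl⟩ := mem_map.1 hc
      exact hres b hb fun hb' => hc0 (LinearMap.mem_ker.1 (hker.ge hb').2)
    have hcard : Fintype.card {j // c₀ j = 0} + wt c₀ = Fintype.card ι := by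
      rw [wt, Nat.card_eq_fintype_card, Fintype.card_subtype_compl]
      have := Fintype.card_subtype_le fun j => c₀ j = 0
      omega
    calc gbound q (κ + 1) δ
        ≤ gbound q (κ + 1) (wt c₀) := gbound.monotone hq _ (hδ c₀ hc₀D hc₀)
      _ = wt c₀ + gbound q κ (wt c₀ ⌈/⌉ q) := gbound.succ' hq _ _
      _ ≤ wt c₀ + Fintype.card {j // c₀ j = 0} := Nat.add_le_add_left (ih _ hmin' hrank) _
      _ = Fintype.card ι := by omega

theorem gbound_finrank_le_card_support (D : Submodule F (ι → F)) {δ : ℕ}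
    (hδ : ∀ c ∈ D, c ≠ 0 → δ ≤ wt c) :
    gbound (Fintype.card F) (finrank F D) δ ≤ Nat.card {j // ∃ c ∈ D, c j ≠ 0} := by
  classical
  let π : (ι → F) →ₗ[F] ({j // ∃ c ∈ D, c j ≠ 0} → F) := LinearMap.funLeft F F Subtype.val
  have hker : D ⊓ LinearMap.ker π = ⊥ := by
    refine eq_bot_iff.2 fun b ⟨hb, hπb⟩ => (mem_bot F).2 (funext fun j => ?_)
    by_contra hbj
    exact hbj (congr_fun (LinearMap.mem_ker.1 hπb) ⟨j, b, hb, hbj⟩)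
  have hwt (b) (hb : b ∈ D) : wt b ≤ wt (π b) :=
    Nat.card_le_card_of_injective (fun j => ⟨⟨j, b, hb, j.prop⟩, j.prop⟩)
      fun _ _ h => Subtype.ext (congrArg (fun j => j.1.1) h)
  have hrank : finrank F (D.map π) = finrank F D := by
    rw [← D.finrank_map_add_finrank_inf_ker π, hker, finrank_bot, add_zero]
  have hδ' (c) (hc : c ∈ D.map π) (hc0 : c ≠ 0) : δ ≤ wt c := by
    obtain ⟨b, hb, rfl⟩ := mem_map.1 hc
    exact (hδ b hb fun hb0 => hc0 (by rw [hb0, map_zero])).trans (hwt b hb)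
  rw [← hrank, Nat.card_eq_fintype_card]
  exact gbound_finrank_le_card _ hδ'

lemma exists_wt_eq_of_card_support_le_gbound {D : Submodule F (ι → F)} {δ : ℕ}
    (hD : 0 < finrank F D) (hδ : ∀ c ∈ D, c ≠ 0 → δ ≤ wt c)
    (hsupp : Nat.card {j // ∃ c ∈ D, c j ≠ 0} ≤ gbound (Fintype.card F) (finrank F D) δ) :
    ∃ c ∈ D, c ≠ 0 ∧ wt c = δ := by
  obtain ⟨c₀, hc₀D, hc₀, hc₀min⟩ := D.exists_min_wt (by rintro rfl; simp at hD)
  refine ⟨c₀, hc₀D, hc₀, le_antisymm ?_ (hδ c₀ hc₀D hc₀)⟩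
  refine (gbound.strictMono (Fintype.card_pos (α := F)) hD).le_iff_le.1 ?_
  exact (gbound_finrank_le_card_support D hc₀min).trans hsupp

end Griesmer

section PointCols

variable {κ ι F : Type*} [Fintype κ] [Fintype ι] [Field F] [Fintype F]

/-- The coordinates whose column spans the projective point `⟨v⟩`: their number is the
multiplicity of `⟨v⟩` in the column multiset of `G`. -/
def pointCols (G : Matrix κ ι F) (v : κ → F) : Set ι :=
  {j | ∃ lam : F, lam ≠ 0 ∧ (fun i => G i j) = lam • v}

open scoped Classical in
lemma card_filter_exists_smul_eq {V : Type*} [AddCommGroup V] [Module F V] [Fintype V] {x : V}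
    (hx : x ≠ 0) :
    #{v : V | ∃ lam : F, lam ≠ 0 ∧ x = lam • v} = Fintype.card F - 1 := by
  have hfilter : ({v : V | ∃ lam : F, lam ≠ 0 ∧ x = lam • v} : Finset V) =
      univ.map ⟨fun u : Fˣ => (u : F) • x,
        fun _ _ h => Units.ext (smul_left_injective F hx h)⟩ := by
    ext v
    simp only [mem_filter, mem_univ, true_and, Finset.mem_map]
    constructor
    · rintro ⟨lam, hlam, rfl⟩
      exact ⟨(Units.mk0 lam hlam)⁻¹, by simp [smul_smul, hlam]⟩
    · rintro ⟨u, rfl⟩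
      refine ⟨((u⁻¹ : Fˣ) : F), by simp, ?_⟩
      change x = _ • ((u : F) • x)
      simp [smul_smul]
  rw [hfilter, card_map, card_univ, Fintype.card_units]

lemma card_mul_le_of_forall_card_pointCols_le (G : Matrix κ ι F)
    (hcol : ∀ j, (fun i => G i j) ≠ 0) {M : ℕ}
    (hM : ∀ v : κ → F, v ≠ 0 → Nat.card (pointCols G v) ≤ M) :
    Fintype.card ι * (Fintype.card F - 1) ≤ (Fintype.card F ^ Fintype.card κ - 1) * M := by
  classical
  calc Fintype.card ι * (Fintype.card F - 1)
        = ∑ j : ι, #{v ∈ univ.erase 0 | j ∈ pointCols G v} := by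
          rw [sum_congr rfl fun j _ => ?_, sum_const, card_univ, smul_eq_mul]
          rw [filter_erase, erase_eq_of_notMem fun h => hcol j ?_]
          · convert card_filter_exists_smul_eq (F := F) (hcol j) using 3
            exact Iff.rfl
          · obtain ⟨lam, -, h⟩ := (mem_filter.1 h).2
            rwa [smul_zero] at h
    _ = ∑ v ∈ univ.erase 0, #{j | j ∈ pointCols G v} :=
          (sum_card_bipartiteAbove_eq_sum_card_bipartiteBelow _).symm
    _ ≤ ∑ v ∈ (univ.erase 0 : Finset (κ → F)), M := sum_le_sum fun v hv => by
          simpa [Nat.card_eq_fintype_card, Fintype.card_subtype] using hM v (ne_of_mem_erase hv)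
    _ = (Fintype.card F ^ Fintype.card κ - 1) * M := by
          rw [sum_const, card_erase_of_mem (mem_univ _), card_univ, Fintype.card_fun, smul_eq_mul]

lemma ceilDiv_pow_le_card_pointCols (G : Matrix κ ι F) (hcol : ∀ j, (fun i => G i j) ≠ 0)
    {g : κ → F} (hmax : ∀ v : κ → F, v ≠ 0 → Nat.card (pointCols G v) ≤ Nat.card (pointCols G g))
    {d : ℕ} (hκ : 0 < Fintype.card κ)
    (hn : Fintype.card ι = gbound (Fintype.card F) (Fintype.card κ) d) :
    d ⌈/⌉ Fintype.card F ^ (Fintype.card κ - 1) ≤ Nat.card (pointCols G g) := by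
  refine ceilDiv_pow_le_of_gbound_mul_le Fintype.one_lt_card hκ ?_
  rw [← hn]
  exact card_mul_le_of_forall_card_pointCols_le G hcol hmax

end PointCols

section ShortenedCode

variable {κ ι F : Type*} [Fintype κ] [Field F]

/-- The shortened subcode `C_P`, `P = ⟨g⟩`, of the code spanned by the rows of `G`. -/
def shortenedCode (G : Matrix κ ι F) (g : κ → F) : Submodule F (ι → F) :=
  LinearMap.range (Matrix.vecMulLinear G) ⊓
    ⨅ j ∈ pointCols G g, LinearMap.ker (LinearMap.proj j : (ι → F) →ₗ[F] F)

variable {G : Matrix κ ι F} {g : κ → F}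

lemma mem_shortenedCode_iff {c : ι → F} :
    c ∈ shortenedCode G g ↔
      c ∈ LinearMap.range (Matrix.vecMulLinear G) ∧ ∀ j ∈ pointCols G g, c j = 0 := by
  simp [shortenedCode, mem_iInf]

lemma vecMul_eq_zero_on_pointCols_iff (hP : (pointCols G g).Nonempty) (a : κ → F) :
    (∀ j ∈ pointCols G g, Matrix.vecMul a G j = 0) ↔ g ⬝ᵥ a = 0 := by
  have hcol {j} (hj : j ∈ pointCols G g) :
      ∃ lam : F, lam ≠ 0 ∧ Matrix.vecMul a G j = lam * (g ⬝ᵥ a) := by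
    obtain ⟨lam, hlam, hj⟩ := hj
    exact ⟨lam, hlam, by rw [← smul_eq_mul, ← smul_dotProduct, ← hj, dotProduct_comm]; rfl⟩
  constructor
  · obtain ⟨j, hj⟩ := hP
    obtain ⟨lam, hlam, h⟩ := hcol hj
    intro hzero
    simpa [hlam, h] using hzero j hj
  · intro hga j hj
    obtain ⟨lam, -, h⟩ := hcol hj
    rw [h, hga, mul_zero]

lemma shortenedCode_eq_map [DecidableEq κ] (hP : (pointCols G g).Nonempty) :
    shortenedCode G g =
      (LinearMap.ker (dotProductEquiv F κ g)).map (Matrix.vecMulLinear G) := by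
  ext c
  simp only [mem_shortenedCode_iff, LinearMap.mem_range, Submodule.mem_map, LinearMap.mem_ker]
  constructor
  · rintro ⟨⟨a, rfl⟩, hzero⟩
    exact ⟨a, (vecMul_eq_zero_on_pointCols_iff hP a).1 hzero, rfl⟩
  · rintro ⟨a, ha, rfl⟩
    exact ⟨⟨a, rfl⟩, (vecMul_eq_zero_on_pointCols_iff hP a).2 ha⟩

lemma finrank_shortenedCode_add_one (hinj : Function.Injective (Matrix.vecMulLinear G))
    (hg : g ≠ 0) (hP : (pointCols G g).Nonempty) :
    finrank F (shortenedCode G g) + 1 = Fintype.card κ := by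
  classical
  rw [shortenedCode_eq_map hP, ← (Submodule.equivMapOfInjective _ hinj _).finrank_eq,
    Module.Dual.finrank_ker_add_one_of_ne_zero ((dotProductEquiv F κ).map_ne_zero_iff.2 hg),
    finrank_fintype_fun_eq_card]

lemma card_support_shortenedCode_add_card_pointCols_le [Fintype ι] (G : Matrix κ ι F)
    (g : κ → F) :
    Nat.card {j // ∃ c ∈ shortenedCode G g, c j ≠ 0} + Nat.card (pointCols G g) ≤
      Fintype.card ι := by
  have hsub : {j | ∃ c ∈ shortenedCode G g, c j ≠ 0} ⊆ (pointCols G g)ᶜ :=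
    fun j ⟨c, hc, hcj⟩ hj => hcj ((mem_shortenedCode_iff.1 hc).2 j hj)
  calc Nat.card {j // ∃ c ∈ shortenedCode G g, c j ≠ 0} + Nat.card (pointCols G g)
      = {j | ∃ c ∈ shortenedCode G g, c j ≠ 0}.ncard + (pointCols G g).ncard := rfl
    _ ≤ (pointCols G g)ᶜ.ncard + (pointCols G g).ncard :=
      Nat.add_le_add_right (Set.ncard_le_ncard hsub) _
    _ = Fintype.card ι := by rw [add_comm, Set.ncard_add_ncard_compl, Nat.card_eq_fintype_card]

end ShortenedCode

theorem stmt6_general {F : Type*} [Field F] [Fintype F] {n k d : ℕ}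
    (hk2 : 2 ≤ k)
    (G : Matrix (Fin k) (Fin n) F)
    (hinj : Function.Injective fun a : Fin k → F => Matrix.vecMul a G)
    (hcol : ∀ j, (fun i => G i j) ≠ 0)
    (hn : n = gbound (Fintype.card F) k d)
    (hmin : ∀ a : Fin k → F, a ≠ 0 → d ≤ wt (Matrix.vecMul a G))
    (g : Fin k → F) (hg : g ≠ 0)
    (hmax : ∀ v : Fin k → F, v ≠ 0 →
      Nat.card {j : Fin n // ∃ lam : F, lam ≠ 0 ∧ (fun i => G i j) = lam • v} ≤
        Nat.card {j : Fin n // ∃ lam : F, lam ≠ 0 ∧ (fun i => G i j) = lam • g})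
    (D : Submodule F (Fin n → F))
    (hD : D = LinearMap.range (Matrix.vecMulLinear G) ⊓
        ⨅ j ∈ {j : Fin n | ∃ lam : F, lam ≠ 0 ∧ (fun i => G i j) = lam • g},
          LinearMap.ker (LinearMap.proj j : (Fin n → F) →ₗ[F] F)) :
    Nat.card {j : Fin n // ∃ c ∈ D, c j ≠ 0} = gbound (Fintype.card F) (k - 1) d ∧
    Module.finrank F D = k - 1 ∧
    (∀ c ∈ D, c ≠ 0 → d ≤ wt c) ∧
    (∃ c ∈ D, c ≠ 0 ∧ wt c = d) := by
  change D = shortenedCode G g at hD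
  subst hD
  set q := Fintype.card F
  have hkn : k ≤ n := by
    simpa using LinearMap.finrank_le_finrank_of_injective (f := Matrix.vecMulLinear G) hinj
  have hd : d ≠ 0 := by
    rintro rfl
    rw [gbound.zero_right] at hn
    omega
  have hm : d ⌈/⌉ q ^ (k - 1) ≤ Nat.card (pointCols G g) := by
    simpa using ceilDiv_pow_le_card_pointCols G hcol hmax (by rw [Fintype.card_fin]; omega)
      (by simpa using hn)
  have hP : (pointCols G g).Nonempty := by
    refine Set.nonempty_of_ncard_ne_zero fun h0 => hd ?_
    have h := hm.trans_eq h0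
    rwa [ceilDiv_le_iff_le_mul (by positivity), mul_zero, Nat.le_zero] at h
  have hrank : finrank F (shortenedCode G g) = k - 1 := by
    have := finrank_shortenedCode_add_one hinj hg hP
    rw [Fintype.card_fin] at this
    omega
  have hwt (c) (hc : c ∈ shortenedCode G g) (hc0 : c ≠ 0) : d ≤ wt c := by
    obtain ⟨a, rfl⟩ := (mem_shortenedCode_iff.1 hc).1
    exact hmin a fun ha => hc0 (by simp [ha])
  have hsupp : Nat.card {j // ∃ c ∈ shortenedCode G g, c j ≠ 0} = gbound q (k - 1) d := by
    have hle := card_support_shortenedCode_add_card_pointCols_le G g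
    have hge : gbound q (k - 1) d ≤ _ := hrank ▸ gbound_finrank_le_card_support _ hwt
    have hn' : n = gbound q (k - 1) d + d ⌈/⌉ q ^ (k - 1) := by
      rw [hn, ← gbound.succ, Nat.sub_add_cancel (by omega)]
    rw [Fintype.card_fin] at hle
    omega
  refine ⟨hsupp, hrank, hwt, exists_wt_eq_of_card_support_le_gbound (by omega) hwt ?_⟩
  rw [hsupp, hrank]

theorem stmt6 {F : Type*} [Field F] [Fintype F] {n k d : ℕ}
    (hk2 : 2 ≤ k)
    (G : Matrix (Fin k) (Fin n) F)
    (hinj : Function.Injective fun a : Fin k → F => Matrix.vecMul a G)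
    (hcol : ∀ j, (fun i => G i j) ≠ 0)
    (hn : n = gbound (Fintype.card F) k d)
    (hmin : ∀ a : Fin k → F, a ≠ 0 → d ≤ wt (Matrix.vecMul a G))
    (hex : ∃ a : Fin k → F, a ≠ 0 ∧ wt (Matrix.vecMul a G) = d)
    (g : Fin k → F) (hg : g ≠ 0)
    (hmax : ∀ v : Fin k → F, v ≠ 0 →
      Nat.card {j : Fin n // ∃ lam : F, lam ≠ 0 ∧ (fun i => G i j) = lam • v} ≤
        Nat.card {j : Fin n // ∃ lam : F, lam ≠ 0 ∧ (fun i => G i j) = lam • g})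
    (D : Submodule F (Fin n → F))
    (hD : D = LinearMap.range (Matrix.vecMulLinear G) ⊓
        ⨅ j ∈ {j : Fin n | ∃ lam : F, lam ≠ 0 ∧ (fun i => G i j) = lam • g},
          LinearMap.ker (LinearMap.proj j : (Fin n → F) →ₗ[F] F)) :
    Nat.card {j : Fin n // ∃ c ∈ D, c j ≠ 0} = gbound (Fintype.card F) (k - 1) d ∧
    Module.finrank F D = k - 1 ∧
    (∀ c ∈ D, c ≠ 0 → d ≤ wt c) ∧
    (∃ c ∈ D, c ≠ 0 ∧ wt c = d) :=
  stmt6_general hk2 G hinj hcol hn hmin g hg hmax D hD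
end

section
/- Let C be a Griesmer [g_q(k,d),k,d] code over F_q, let a be a minimum weight codeword, and let P_a : C → Res(C,a) be the puncturing map at supp(a). If q divides d, then every preimage under P_a of a minimum weight codeword of Res(C,a) has weight exactly d in C. -/
/-!
Averaging over the line `b + ⟨a⟩`: a coordinate in `supp a` is nonzero in `b + l • a` for all but
one `l`, a coordinate outside `supp a` is nonzero for all `l` or for none. Hence
`∑ₗ wt (b + l • a) = (q - 1) wt a + q wt (res b)`, which equals `q d` when `wt a = d` and
`wt (res b) = d / q`. All `q` summands are codewords of weight at least `d`, so all equal `d`;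
the one with `l = 0` is `b`.
-/

open Finset

lemma Nat.add_sub_one_div_of_dvd {d q : ℕ} (hq : 0 < q) (hqd : q ∣ d) :
    (d + q - 1) / q = d / q := by
  obtain ⟨e, rfl⟩ := hqd
  rw [Nat.add_sub_assoc hq, Nat.mul_add_div hq, Nat.div_eq_of_lt (Nat.sub_lt hq Nat.one_pos),
    Nat.mul_div_cancel_left e hq, add_zero]

section Weight

variable {ι F : Type*}

lemma wt_eq_card_filter [Fintype ι] [Zero F] [DecidableEq F] (c : ι → F) :
    wt c = #{i | c i ≠ 0} := by
  rw [wt, Nat.card_eq_fintype_card, Fintype.card_subtype]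

lemma wt_restrict_eq_card_filter [Fintype ι] [Zero F] [DecidableEq F] (a b : ι → F) :
    wt (fun i : {i // a i = 0} => b i) = #{i | a i = 0 ∧ b i ≠ 0} := by
  rw [wt, Nat.card_congr (Equiv.subtypeSubtypeEquivSubtypeInter (a · = 0) (b · ≠ 0)),
    Nat.card_eq_fintype_card, Fintype.card_subtype]

lemma wt_eq_zero_iff [Finite ι] [Zero F] {c : ι → F} : wt c = 0 ↔ c = 0 := by
  rw [wt, Nat.card_eq_zero, or_iff_left (not_infinite_iff_finite.2 inferInstance),
    isEmpty_subtype, funext_iff]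
  simp

lemma add_smul_ne_zero_of_wt_restrict_ne_zero [Finite ι] [Field F] {a b : ι → F}
    (h : wt (fun i : {i // a i = 0} => b i) ≠ 0) (l : F) : b + l • a ≠ 0 := by
  obtain ⟨⟨i, hai⟩, hbi⟩ := Function.ne_iff.1 (mt wt_eq_zero_iff.2 h)
  exact Function.ne_iff.2 ⟨i, by simpa [hai] using hbi⟩

end Weight

section Averaging

variable {ι F : Type*} [Field F] [Fintype F] [DecidableEq F]

lemma card_filter_add_mul_ne_zero {x : F} (hx : x ≠ 0) (y : F) :
    #{l : F | y + l * x ≠ 0} = Fintype.card F - 1 := by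
  have : ({l : F | y + l * x ≠ 0} : Finset F) = univ.erase (-y / x) := by
    ext l
    simp only [mem_filter, mem_erase, mem_univ, true_and, and_true, ne_eq, eq_div_iff hx,
      eq_neg_iff_add_eq_zero, add_comm y]
  rw [this, card_erase_of_mem (mem_univ _), card_univ]

lemma sum_wt_add_smul [Fintype ι] (a b : ι → F) :
    ∑ l : F, wt (b + l • a)
      = (Fintype.card F - 1) * wt a + Fintype.card F * wt (fun i : {i // a i = 0} => b i) := by
  rw [wt_restrict_eq_card_filter]
  simp only [wt_eq_card_filter, card_filter]
  rw [sum_comm, mul_sum, mul_sum, ← sum_add_distrib]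
  refine sum_congr rfl fun i _ => ?_
  simp only [Pi.add_apply, Pi.smul_apply, smul_eq_mul, ← card_filter]
  by_cases ha : a i = 0
  · by_cases hb : b i = 0 <;> simp [ha, hb]
  · simp [ha, card_filter_add_mul_ne_zero ha]

end Averaging

theorem stmt8_general {F : Type*} [Field F] [Fintype F] {n d : ℕ}
    (C : Submodule F (Fin n → F))
    (hmin : ∀ c ∈ C, c ≠ 0 → d ≤ wt c)
    (a : Fin n → F) (haC : a ∈ C) (haw : wt a = d)
    (hqd : Fintype.card F ∣ d) :
    ∀ b ∈ C,
      wt (fun i : {i : Fin n // a i = 0} => b i)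
          = (d + Fintype.card F - 1) / Fintype.card F →
      wt b = d := by
  classical
  intro b hb hres
  set q := Fintype.card F
  have hq : 0 < q := Fintype.card_pos
  rw [Nat.add_sub_one_div_of_dvd hq hqd] at hres
  have hsum : ∑ l : F, wt (b + l • a) = ∑ _l : F, d := by
    rw [sum_wt_add_smul, haw, hres, Nat.mul_div_cancel' hqd, sum_const, card_univ, smul_eq_mul,
      ← Nat.succ_mul, Nat.succ_eq_add_one, Nat.sub_add_cancel hq]
  have hlow : ∀ l : F, d ≤ wt (b + l • a) := by
    intro l
    rcases eq_or_ne (d / q) 0 with h | h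
    · rw [Nat.eq_zero_of_dvd_of_div_eq_zero hqd h]
      exact Nat.zero_le _
    · exact hmin _ (C.add_mem hb (C.smul_mem l haC))
        (add_smul_ne_zero_of_wt_restrict_ne_zero (hres ▸ h) l)
  simpa using ((sum_eq_sum_iff_of_le fun l _ => hlow l).1 hsum.symm 0 (mem_univ 0)).symm

theorem stmt8 {F : Type*} [Field F] [Fintype F] {n k d : ℕ}
    (C : Submodule F (Fin n → F))
    (hk : Module.finrank F C = k)
    (hn : n = gbound (Fintype.card F) k d)
    (hmin : ∀ c ∈ C, c ≠ 0 → d ≤ wt c)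
    (hex : ∃ c ∈ C, c ≠ 0 ∧ wt c = d)
    (a : Fin n → F) (haC : a ∈ C) (haw : wt a = d)
    (hqd : Fintype.card F ∣ d) :
    ∀ b ∈ C,
      wt (fun i : {i : Fin n // a i = 0} => b i)
          = (d + Fintype.card F - 1) / Fintype.card F →
      wt b = d :=
  stmt8_general C hmin a haC haw hqd
end
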